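/- Let n ≥ 3 be an integer and let G_0 be the graph with vertex set {v_{i,p} : i ∈ {1,2,3}, 1 ≤ p ≤ n} \ {v_{2,n}} where for each i ∈ {1,2,3} the surviving vertices with first index i form a complete graph, v_{1,p} is adjacent to v_{2,p} and v_{2,p} is adjacent to v_{3,p} for each 1 ≤ p ≤ n − 1, and additionally v_{1,n} is adjacent to v_{3,n}. Then the toughness of G_0 equals (n+1)/3; that is, every vertex set S with ω(G_0 − S) ≥ 2 satisfies 3|S| ≥ (n+1)·ω(G_0 − S), and the set S = {v_{2,1}, …, v_{2,n−2}} ∪ {v_{1,n−1}, v_{3,n−1}, v_{3,n}} satisfies |S| = n + 1 and ω(G_0 − S) = 3. -/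
import Mathlib


open SimpleGraph Function

/-- `numComp G S` is ω(G − S): the number of connected components of the graph
obtained from `G` by deleting the vertex set `S`. -/
noncomputable def numComp {V : Type*} (G : SimpleGraph V) (S : Set V) : ℕ :=
  Nat.card (G.induce Sᶜ).ConnectedComponent

/-- The deleted middle vertex `v_{2,n}` (zero-indexed: `(1, n-1)`). -/
def delVert (n : ℕ) (h : 0 < n) : Fin 3 × Fin n :=
  (1, ⟨n - 1, Nat.sub_lt h Nat.one_pos⟩)

/-- The graph `G_0`: obtained from `K_n □ P_3` by deleting the middle vertex
`v_{2,n}` of the induced path `v_{1,n} v_{2,n} v_{3,n}` and adding the edge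
`v_{1,n} v_{3,n}`. -/
def G0 (n : ℕ) (h : 0 < n) : SimpleGraph {x : Fin 3 × Fin n // x ≠ delVert n h} :=
  SimpleGraph.fromRel (fun x y =>
    (x.1.1 = y.1.1 ∧ x.1.2 ≠ y.1.2) ∨
    (x.1.2 = y.1.2 ∧ x.1.1.val + 1 = y.1.1.val) ∨
    (x.1 = (0, ⟨n - 1, Nat.sub_lt h Nat.one_pos⟩) ∧
     y.1 = (2, ⟨n - 1, Nat.sub_lt h Nat.one_pos⟩)))

/-- The cut-set of STATEMENT 17:
`{v_{2,1}, …, v_{2,n−2}} ∪ {v_{1,n−1}, v_{3,n−1}, v_{3,n}}` (zero-indexed). -/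
def g0Cut (n : ℕ) (h : 0 < n) : Set {x : Fin 3 × Fin n // x ≠ delVert n h} :=
  {x | (x.1.1 = 1 ∧ x.1.2.val < n - 2) ∨
       (x.1.1 = 0 ∧ x.1.2.val = n - 2) ∨
       (x.1.1 = 2 ∧ n - 2 ≤ x.1.2.val)}

abbrev Vtx (n : ℕ) (h : 0 < n) := {x : Fin 3 × Fin n // x ≠ delVert n h}

section Aux
variable {n : ℕ} {h : 0 < n}

lemma ne_delVert {i : Fin 3} {p : Fin n} (hip : (i : ℕ) ≠ 1 ∨ (p : ℕ) ≠ n - 1) :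
    (i, p) ≠ delVert n h := by
  intro e
  rw [delVert, Prod.mk.injEq] at e
  rcases hip with hi | hp
  · exact hi (by rw [e.1]; rfl)
  · exact hp (by rw [e.2])

lemma G0_adj_row {x y : Vtx n h} (hr : x.1.1 = y.1.1) (hc : x.1.2 ≠ y.1.2) :
    (G0 n h).Adj x y := by
  refine (SimpleGraph.fromRel_adj _ _ _).2 ⟨?_, Or.inl (Or.inl ⟨hr, hc⟩)⟩
  intro e; exact hc (by rw [e])

lemma G0_adj_vert {x y : Vtx n h} (hc : x.1.2 = y.1.2) (hr : (x.1.1 : ℕ) + 1 = (y.1.1 : ℕ)) :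
    (G0 n h).Adj x y := by
  refine (SimpleGraph.fromRel_adj _ _ _).2 ⟨?_, Or.inl (Or.inr (Or.inl ⟨hc, hr⟩))⟩
  intro e; rw [e] at hr; omega

lemma G0_adj_diag {x y : Vtx n h} (hx : x.1 = (0, ⟨n - 1, Nat.sub_lt h Nat.one_pos⟩))
    (hy : y.1 = (2, ⟨n - 1, Nat.sub_lt h Nat.one_pos⟩)) :
    (G0 n h).Adj x y := by
  refine (SimpleGraph.fromRel_adj _ _ _).2 ⟨?_, Or.inl (Or.inr (Or.inr ⟨hx, hy⟩))⟩
  intro e; rw [e, hy] at hx; simp [Prod.ext_iff] at hx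

variable {S : Set (Vtx n h)}

lemma ind_adj {a b : ↥Sᶜ} (hab : (G0 n h).Adj a.1 b.1) :
    ((G0 n h).induce Sᶜ).Adj a b := hab

lemma reach_row {a b : ↥Sᶜ} (hr : a.1.1.1 = b.1.1.1) :
    ((G0 n h).induce Sᶜ).Reachable a b := by
  by_cases he : a = b
  · subst he; exact Reachable.refl _
  · refine (ind_adj (G0_adj_row hr ?_)).reachable
    intro hc
    exact he (Subtype.ext (Subtype.ext (Prod.ext hr hc)))

end Aux

section Comp
variable {n : ℕ} {h : 0 < n} {S : Set (Vtx n h)}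

/-- The row of a chosen representative of a connected component. -/
noncomputable def repRow (S : Set (Vtx n h)) (c : ((G0 n h).induce Sᶜ).ConnectedComponent) :
    Fin 3 :=
  (Classical.choose c.exists_rep).1.1.1

lemma repRow_inj : Injective (repRow S) := by
  intro c d hcd
  have hc := Classical.choose_spec c.exists_rep
  have hd := Classical.choose_spec d.exists_rep
  rw [← hc, ← hd]
  exact ConnectedComponent.sound (reach_row hcd)

lemma numComp_le_three : numComp (G0 n h) S ≤ 3 := by
  have := Nat.card_le_card_of_injective _ (repRow_inj (S := S))
  simpa [numComp] using this

lemma exists_nonreach (h2 : 2 ≤ numComp (G0 n h) S) :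
    ∃ a b : ↥Sᶜ, ¬ ((G0 n h).induce Sᶜ).Reachable a b := by
  rw [numComp, Nat.lt_iff_add_one_le.symm, Finite.one_lt_card_iff_nontrivial] at h2
  obtain ⟨c, d, hcd⟩ := h2
  obtain ⟨a, ha⟩ := c.exists_rep
  obtain ⟨b, hb⟩ := d.exists_rep
  exact ⟨a, b, fun hr => hcd (by rw [← ha, ← hb]; exact ConnectedComponent.sound hr)⟩

lemma exists_three_rows (h3 : 3 ≤ numComp (G0 n h) S) :
    ∃ u0 u1 u2 : ↥Sᶜ, u0.1.1.1 = 0 ∧ u1.1.1.1 = 1 ∧ u2.1.1.1 = 2 ∧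
      ¬ ((G0 n h).induce Sᶜ).Reachable u0 u1 ∧
      ¬ ((G0 n h).induce Sᶜ).Reachable u1 u2 ∧
      ¬ ((G0 n h).induce Sᶜ).Reachable u0 u2 := by
  have hcard : Nat.card ((G0 n h).induce Sᶜ).ConnectedComponent = 3 :=
    le_antisymm numComp_le_three h3
  have hbij : Bijective (repRow S) :=
    (Nat.bijective_iff_injective_and_card _).2 ⟨repRow_inj, by rw [hcard]; simp⟩
  obtain ⟨c0, hc0⟩ := hbij.2 0
  obtain ⟨c1, hc1⟩ := hbij.2 1
  obtain ⟨c2, hc2⟩ := hbij.2 2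
  have key : ∀ c d : ((G0 n h).induce Sᶜ).ConnectedComponent, repRow S c ≠ repRow S d →
      ¬ ((G0 n h).induce Sᶜ).Reachable (Classical.choose c.exists_rep)
        (Classical.choose d.exists_rep) := by
    intro c d hne hr
    have hcd : c = d := by
      rw [← Classical.choose_spec c.exists_rep, ← Classical.choose_spec d.exists_rep]
      exact ConnectedComponent.sound hr
    exact hne (by rw [hcd])
  exact ⟨Classical.choose c0.exists_rep, Classical.choose c1.exists_rep,
    Classical.choose c2.exists_rep, hc0, hc1, hc2,
    key c0 c1 (by rw [hc0, hc1]; decide), key c1 c2 (by rw [hc1, hc2]; decide),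
    key c0 c2 (by rw [hc0, hc2]; decide)⟩

end Comp

section Hub
variable {n : ℕ} {h : 0 < n} {S : Set (Vtx n h)}

lemma col_meets_S (hn : 3 ≤ n) {a b : ↥Sᶜ}
    (hab : ¬ ((G0 n h).induce Sᶜ).Reachable a b) {p : Fin n} (hp : (p : ℕ) ≤ n - 2) :
    ∃ v, v ∈ S ∧ v.1.2 = p := by
  by_contra hc
  push_neg at hc
  have hnp : (p : ℕ) ≠ n - 1 := by omega
  have hmem : ∀ i : Fin 3, (⟨(i, p), ne_delVert (Or.inr hnp)⟩ : Vtx n h) ∈ Sᶜ :=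
    fun i hi => hc _ hi rfl
  set vv : Fin 3 → ↥Sᶜ := fun i => ⟨⟨(i, p), ne_delVert (Or.inr hnp)⟩, hmem i⟩ with hvv
  have hreach : ∀ c : ↥Sᶜ, ((G0 n h).induce Sᶜ).Reachable c (vv 1) := by
    intro c
    have h1 : ((G0 n h).induce Sᶜ).Reachable c (vv c.1.1.1) := reach_row rfl
    refine h1.trans ?_
    generalize c.1.1.1 = i
    obtain ⟨iv, hiv⟩ := i
    interval_cases iv
    · exact (ind_adj (a := vv ⟨0, hiv⟩) (b := vv 1) (G0_adj_vert rfl rfl)).reachable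
    · have e : (⟨1, hiv⟩ : Fin 3) = (1 : Fin 3) := rfl
      rw [e]
    · exact (ind_adj (a := vv 1) (b := vv ⟨2, hiv⟩) (G0_adj_vert rfl rfl)).reachable.symm
  exact hab ((hreach a).trans (hreach b).symm)

lemma last_col_or_double (hn : 3 ≤ n) {a b : ↥Sᶜ}
    (hab : ¬ ((G0 n h).induce Sᶜ).Reachable a b) :
    (∃ v, v ∈ S ∧ (v.1.2 : ℕ) = n - 1) ∨
    (∃ q : Fin n, (q : ℕ) ≤ n - 2 ∧
      ∃ u v, u ∈ S ∧ v ∈ S ∧ u ≠ v ∧ u.1.2 = q ∧ v.1.2 = q) := by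
  by_contra hc
  push_neg at hc
  obtain ⟨h1, h2⟩ := hc
  have hfl : n - 1 < n := by omega
  set fl : Fin n := ⟨n - 1, hfl⟩ with hflv
  set w0 : Vtx n h := ⟨(0, fl), ne_delVert (Or.inl (by decide))⟩ with hw0v
  set w2 : Vtx n h := ⟨(2, fl), ne_delVert (Or.inl (by decide))⟩ with hw2v
  have hw0 : w0 ∈ Sᶜ := fun hs => h1 w0 hs rfl
  have hw2 : w2 ∈ Sᶜ := fun hs => h1 w2 hs rfl
  have hub : ∀ c : ↥Sᶜ, ((G0 n h).induce Sᶜ).Reachable c ⟨w0, hw0⟩ := by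
    intro c
    obtain ⟨⟨⟨i, p⟩, hvne⟩, hcS⟩ := c
    obtain ⟨iv, hiv⟩ := i
    interval_cases iv
    · exact reach_row rfl
    · have hpn : (p : ℕ) ≠ n - 1 := by
        intro he
        exact hvne (by rw [delVert]; exact Prod.ext rfl (Fin.ext he))
      have hple : (p : ℕ) ≤ n - 2 := by
        have := p.isLt
        omega
      set x0 : Vtx n h := ⟨((0 : Fin 3), p), ne_delVert (Or.inl (by decide))⟩ with hx0v
      set x2 : Vtx n h := ⟨((2 : Fin 3), p), ne_delVert (Or.inl (by decide))⟩ with hx2v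
      have hor : x0 ∉ S ∨ x2 ∉ S := by
        by_contra hb
        push_neg at hb
        refine h2 p hple x0 x2 hb.1 hb.2 ?_ rfl rfl
        intro e
        have := congrArg (fun v : Vtx n h => (v.1.1 : ℕ)) e
        simp [hx0v, hx2v] at this
      rcases hor with hx0 | hx2
      · refine Reachable.trans ?_ ((reach_row (a := ⟨x0, hx0⟩) (b := ⟨w0, hw0⟩)) rfl)
        exact (ind_adj (a := ⟨x0, hx0⟩) (b := ⟨⟨(⟨1, hiv⟩, p), hvne⟩, hcS⟩)
          (G0_adj_vert rfl rfl)).reachable.symm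
      · refine Reachable.trans ?_ (Reachable.trans
          ((reach_row (a := ⟨x2, hx2⟩) (b := ⟨w2, hw2⟩)) rfl)
          ((ind_adj (a := ⟨w0, hw0⟩) (b := ⟨w2, hw2⟩) (G0_adj_diag rfl rfl)).reachable.symm))
        exact (ind_adj (a := ⟨⟨(⟨1, hiv⟩, p), hvne⟩, hcS⟩) (b := ⟨x2, hx2⟩)
          (G0_adj_vert rfl rfl)).reachable
    · exact (reach_row (a := ⟨⟨(⟨2, hiv⟩, p), hvne⟩, hcS⟩) (b := ⟨w2, hw2⟩) rfl).trans
        ((ind_adj (a := ⟨w0, hw0⟩) (b := ⟨w2, hw2⟩) (G0_adj_diag rfl rfl)).reachable.symm)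
  exact hab ((hub a).trans (hub b).symm)

end Hub

section Count
variable {n : ℕ} {h : 0 < n} {S : Set (Vtx n h)}

lemma three_rows_S (hn : 3 ≤ n) {u0 u1 u2 : ↥Sᶜ}
    (h0 : u0.1.1.1 = 0) (h1 : u1.1.1.1 = 1) (h2 : u2.1.1.1 = 2)
    (h01 : ¬ ((G0 n h).induce Sᶜ).Reachable u0 u1)
    (h12 : ¬ ((G0 n h).induce Sᶜ).Reachable u1 u2)
    (h02 : ¬ ((G0 n h).induce Sᶜ).Reachable u0 u2) :
    ∃ q : Fin n, (q : ℕ) ≤ n - 2 ∧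
      (⟨((0 : Fin 3), q), ne_delVert (Or.inl (by decide))⟩ : Vtx n h) ∈ S ∧
      (⟨((2 : Fin 3), q), ne_delVert (Or.inl (by decide))⟩ : Vtx n h) ∈ S ∧
      ∃ w, w ∈ S ∧ (w.1.2 : ℕ) = n - 1 := by
  set q : Fin n := u1.1.1.2 with hqv
  have hq : (q : ℕ) ≤ n - 2 := by
    have hpn : (q : ℕ) ≠ n - 1 := by
      intro he
      exact u1.1.2 (Prod.ext h1 (Fin.ext he))
    have := q.isLt
    omega
  set x0 : Vtx n h := ⟨((0 : Fin 3), q), ne_delVert (Or.inl (by decide))⟩ with hx0v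
  set x2 : Vtx n h := ⟨((2 : Fin 3), q), ne_delVert (Or.inl (by decide))⟩ with hx2v
  refine ⟨q, hq, ?_, ?_, ?_⟩
  · by_contra hs
    refine h01 (Reachable.trans (reach_row (a := u0) (b := ⟨x0, hs⟩) (by rw [h0])) ?_)
    exact (ind_adj (a := ⟨x0, hs⟩) (b := u1) (G0_adj_vert rfl (by rw [h1]; rfl))).reachable
  · by_contra hs
    refine h12 (Reachable.trans ?_ (reach_row (a := ⟨x2, hs⟩) (b := u2) (by rw [h2])))
    exact (ind_adj (a := u1) (b := ⟨x2, hs⟩) (G0_adj_vert rfl (by rw [h1]; rfl))).reachable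
  · by_contra hs
    push_neg at hs
    have hfl : n - 1 < n := by omega
    set w0 : Vtx n h := ⟨((0 : Fin 3), ⟨n - 1, hfl⟩), ne_delVert (Or.inl (by decide))⟩ with hw0v
    set w2 : Vtx n h := ⟨((2 : Fin 3), ⟨n - 1, hfl⟩), ne_delVert (Or.inl (by decide))⟩ with hw2v
    have hw0 : w0 ∈ Sᶜ := fun hmem => hs w0 hmem rfl
    have hw2 : w2 ∈ Sᶜ := fun hmem => hs w2 hmem rfl
    refine h02 (Reachable.trans (reach_row (a := u0) (b := ⟨w0, hw0⟩) (by rw [h0])) ?_)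
    refine Reachable.trans
      ((ind_adj (a := ⟨w0, hw0⟩) (b := ⟨w2, hw2⟩) (G0_adj_diag rfl rfl)).reachable) ?_
    exact reach_row (a := ⟨w2, hw2⟩) (b := u2) (by rw [h2])

lemma ncard_ge (S : Set (Vtx n h)) {k : ℕ} (f : Fin k → Vtx n h) (hfS : ∀ i, f i ∈ S)
    (hinj : Function.Injective f) : k ≤ S.ncard := by
  have hle : Nat.card (Fin k) ≤ Nat.card ↥S :=
    Nat.card_le_card_of_injective (fun i => (⟨f i, hfS i⟩ : ↥S))
      (fun i j hij => hinj (congrArg Subtype.val hij))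
  simpa [Nat.card_coe_set_eq] using hle

end Count

section Bound
variable {n : ℕ} {h : 0 < n} {S : Set (Vtx n h)}

lemma S_ge_n (hn : 3 ≤ n) (h2 : 2 ≤ numComp (G0 n h) S) : n ≤ S.ncard := by
  obtain ⟨a, b, hab⟩ := exists_nonreach h2
  have hcol : ∀ p : Fin n, (p : ℕ) ≤ n - 2 → ∃ v, v ∈ S ∧ v.1.2 = p :=
    fun p hp => col_meets_S hn hab hp
  choose cS hcS1 hcS2 using hcol
  rcases last_col_or_double hn hab with ⟨w, hwS, hwc⟩ |
    ⟨q, hq, u, v, huS, hvS, huv, hucol, hvcol⟩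
  · set f : Fin n → Vtx n h := fun p => if hp : (p : ℕ) ≤ n - 2 then cS p hp else w with hfv
    have hmem : ∀ p, f p ∈ S := by
      intro p; rw [hfv]; dsimp only; split
      · exact hcS1 _ _
      · exact hwS
    have hcolf : ∀ p, ((f p).1.2 : ℕ) = (p : ℕ) := by
      intro p; rw [hfv]; dsimp only; split
      · rw [hcS2]
      · rename_i hp
        have := p.isLt
        omega
    refine ncard_ge S f hmem ?_
    intro p1 p2 he
    have e1 := hcolf p1
    rw [he, hcolf] at e1
    exact Fin.ext e1.symm
  · set f : Fin n → Vtx n h := fun p =>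
      if p = q then u else if hpn : (p : ℕ) = n - 1 then v else
        cS p (by have := p.isLt; omega) with hfv
    have hmem : ∀ p, f p ∈ S := by
      intro p; rw [hfv]; dsimp only; split
      · exact huS
      · split
        · exact hvS
        · exact hcS1 _ _
    have hφ : ∀ p : Fin n, (if f p = v then n - 1 else ((f p).1.2 : ℕ)) = (p : ℕ) := by
      intro p
      by_cases hpq : p = q
      · have hfp : f p = u := by rw [hfv]; dsimp only; rw [if_pos hpq]
        rw [hfp, if_neg huv, hucol, hpq]
      · by_cases hpn : (p : ℕ) = n - 1
        · have hfp : f p = v := by rw [hfv]; dsimp only; rw [if_neg hpq, dif_pos hpn]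
          rw [hfp, if_pos rfl, hpn]
        · have hfp : f p = cS p (by have := p.isLt; omega) := by
            rw [hfv]; dsimp only; rw [if_neg hpq, dif_neg hpn]
          have hne : cS p (by have := p.isLt; omega) ≠ v := by
            intro he
            exact hpq (by rw [← hcS2 p (by have := p.isLt; omega), he, hvcol])
          rw [hfp, if_neg hne, hcS2]
    refine ncard_ge S f hmem ?_
    intro p1 p2 he
    have e1 := hφ p1
    rw [he, hφ] at e1
    exact Fin.ext e1.symm

lemma S_ge_n1 (hn : 3 ≤ n) (h3 : 3 ≤ numComp (G0 n h) S) : n + 1 ≤ S.ncard := by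
  obtain ⟨u0, u1, u2, h0, h1, h2, h01, h12, h02⟩ := exists_three_rows h3
  have hcol : ∀ p : Fin n, (p : ℕ) ≤ n - 2 → ∃ v, v ∈ S ∧ v.1.2 = p :=
    fun p hp => col_meets_S hn h01 hp
  choose cS hcS1 hcS2 using hcol
  obtain ⟨q, hq, hs0, hs2, w, hwS, hwc⟩ := three_rows_S hn h0 h1 h2 h01 h12 h02
  set x0 : Vtx n h := ⟨((0 : Fin 3), q), ne_delVert (Or.inl (by decide))⟩ with hx0v
  set x2 : Vtx n h := ⟨((2 : Fin 3), q), ne_delVert (Or.inl (by decide))⟩ with hx2v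
  have hx02 : x0 ≠ x2 := by
    intro e
    have := congrArg (fun x : Vtx n h => (x.1.1 : ℕ)) e
    simp [hx0v, hx2v] at this
  have hqn : (q : ℕ) < n := q.isLt
  set f : Fin (n + 1) → Vtx n h := fun k =>
    if hk : (k : ℕ) = n then x2
    else if hkq : (k : ℕ) = (q : ℕ) then x0
    else if hkn : (k : ℕ) = n - 1 then w
    else cS ⟨(k : ℕ), by have := k.isLt; omega⟩
      (by show (k : ℕ) ≤ n - 2; have := k.isLt; omega) with hfv
  have hmem : ∀ k, f k ∈ S := by
    intro k; rw [hfv]; dsimp only; split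
    · exact hs2
    · split
      · exact hs0
      · split
        · exact hwS
        · exact hcS1 _ _
  have hψ : ∀ k : Fin (n + 1),
      (if f k = x2 then n else if ((f k).1.2 : ℕ) = n - 1 then n - 1 else ((f k).1.2 : ℕ))
        = (k : ℕ) := by
    intro k
    by_cases hk : (k : ℕ) = n
    · have hfp : f k = x2 := by rw [hfv]; dsimp only; rw [dif_pos hk]
      rw [hfp, if_pos rfl, hk]
    · by_cases hkq : (k : ℕ) = (q : ℕ)
      · have hfp : f k = x0 := by rw [hfv]; dsimp only; rw [dif_neg hk, dif_pos hkq]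
        have hcx0 : ((x0.1.2 : ℕ)) = (q : ℕ) := rfl
        rw [hfp, if_neg hx02, hcx0, if_neg (by omega), hkq]
      · by_cases hkn : (k : ℕ) = n - 1
        · have hfp : f k = w := by
            rw [hfv]; dsimp only; rw [dif_neg hk, dif_neg hkq, dif_pos hkn]
          have hwx2 : w ≠ x2 := by
            intro he
            have : ((w.1.2 : ℕ)) = (q : ℕ) := by rw [he]
            omega
          rw [hfp, if_neg hwx2, if_pos hwc, hkn]
        · have hklt : (k : ℕ) < n := by have := k.isLt; omega
          have hfp : f k = cS ⟨(k : ℕ), hklt⟩ (by show (k : ℕ) ≤ n - 2; omega) := by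
            rw [hfv]; dsimp only; rw [dif_neg hk, dif_neg hkq, dif_neg hkn]
          have hcc : ((cS ⟨(k : ℕ), hklt⟩ (by show (k : ℕ) ≤ n - 2; omega)).1.2 : ℕ)
              = (k : ℕ) := by
            rw [hcS2]
          have hne : cS ⟨(k : ℕ), hklt⟩ (by show (k : ℕ) ≤ n - 2; omega) ≠ x2 := by
            intro he
            have : ((cS ⟨(k : ℕ), hklt⟩
                (by show (k : ℕ) ≤ n - 2; omega)).1.2 : ℕ) = (q : ℕ) := by rw [he]
            omega
          rw [hfp, if_neg hne, hcc, if_neg hkn]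
  refine ncard_ge S f hmem ?_
  intro k1 k2 he
  have e1 := hψ k1
  rw [he, hψ] at e1
  exact Fin.ext e1.symm

lemma part1 (hn : 3 ≤ n) (S : Set (Vtx n h)) (h2 : 2 ≤ numComp (G0 n h) S) :
    (n + 1) * numComp (G0 n h) S ≤ 3 * S.ncard := by
  have hle3 : numComp (G0 n h) S ≤ 3 := numComp_le_three
  have hgen : n ≤ S.ncard := S_ge_n hn h2
  have hcases : numComp (G0 n h) S = 2 ∨ numComp (G0 n h) S = 3 := by omega
  rcases hcases with hc | hc
  · rw [hc]; omega
  · rw [hc]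
    have := S_ge_n1 (S := S) hn (by rw [hc])
    omega

end Bound

section Part2
variable {n : ℕ} {h : 0 < n}

lemma cut_ncard (hn : 3 ≤ n) : (g0Cut n h).ncard = n + 1 := by
  have hn2 : n - 2 < n := by omega
  have hn1 : n - 1 < n := by omega
  set A : Vtx n h := ⟨((0 : Fin 3), ⟨n - 2, hn2⟩), ne_delVert (Or.inl (by decide))⟩ with hA
  set B : Vtx n h := ⟨((2 : Fin 3), ⟨n - 2, hn2⟩), ne_delVert (Or.inl (by decide))⟩ with hB
  set C : Vtx n h := ⟨((2 : Fin 3), ⟨n - 1, hn1⟩), ne_delVert (Or.inl (by decide))⟩ with hC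
  set f : Fin (n + 1) → Vtx n h := fun k =>
    if hk1 : (k : ℕ) < n - 2 then
      ⟨((1 : Fin 3), ⟨(k : ℕ), by omega⟩), ne_delVert (Or.inr (by show (k:ℕ) ≠ n - 1; omega))⟩
    else if hk2 : (k : ℕ) = n - 2 then A
    else if hk3 : (k : ℕ) = n - 1 then B
    else C with hfv
  have hmem : ∀ k, f k ∈ g0Cut n h := by
    intro k; rw [hfv]; dsimp only; split
    · rename_i hk1
      exact Or.inl ⟨rfl, hk1⟩
    · split
      · exact Or.inr (Or.inl ⟨rfl, rfl⟩)
      · split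
        · exact Or.inr (Or.inr ⟨rfl, le_refl _⟩)
        · exact Or.inr (Or.inr ⟨rfl, by show n - 2 ≤ n - 1; omega⟩)
  have hψ : ∀ k : Fin (n + 1),
      (if ((f k).1.1 : ℕ) = 1 then ((f k).1.2 : ℕ)
       else if ((f k).1.1 : ℕ) = 0 then n - 2
       else if ((f k).1.2 : ℕ) = n - 2 then n - 1 else n) = (k : ℕ) := by
    intro k
    by_cases hk1 : (k : ℕ) < n - 2
    · have hfp : f k = ⟨((1 : Fin 3), ⟨(k : ℕ), by omega⟩),
          ne_delVert (Or.inr (by show (k:ℕ) ≠ n - 1; omega))⟩ := by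
        rw [hfv]; dsimp only; rw [dif_pos hk1]
      rw [hfp, if_pos (show ((1 : Fin 3) : ℕ) = 1 from rfl)]
    · by_cases hk2 : (k : ℕ) = n - 2
      · have hfp : f k = A := by
          rw [hfv]; dsimp only; rw [dif_neg hk1, dif_pos hk2]
        rw [hfp, hA, if_neg (show ¬ ((0 : Fin 3) : ℕ) = 1 by decide),
          if_pos (show ((0 : Fin 3) : ℕ) = 0 from rfl)]
        omega
      · by_cases hk3 : (k : ℕ) = n - 1
        · have hfp : f k = B := by
            rw [hfv]; dsimp only; rw [dif_neg hk1, dif_neg hk2, dif_pos hk3]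
          rw [hfp, hB, if_neg (show ¬ ((2 : Fin 3) : ℕ) = 1 by decide),
            if_neg (show ¬ ((2 : Fin 3) : ℕ) = 0 by decide),
            if_pos (show ((⟨n - 2, hn2⟩ : Fin n) : ℕ) = n - 2 from rfl)]
          omega
        · have hfp : f k = C := by
            rw [hfv]; dsimp only; rw [dif_neg hk1, dif_neg hk2, dif_neg hk3]
          rw [hfp, hC, if_neg (show ¬ ((2 : Fin 3) : ℕ) = 1 by decide),
            if_neg (show ¬ ((2 : Fin 3) : ℕ) = 0 by decide),
            if_neg (show ¬ ((⟨n - 1, hn1⟩ : Fin n) : ℕ) = n - 2 by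
              show ¬ (n - 1 = n - 2); omega)]
          have := k.isLt
          omega
  have hinj : Function.Injective f := by
    intro k1 k2 he
    have e1 := hψ k1
    rw [he, hψ] at e1
    exact Fin.ext e1.symm
  have hsurj : ∀ x : Vtx n h, x ∈ g0Cut n h → ∃ k, f k = x := by
    rintro ⟨⟨i, p⟩, hne⟩ hx
    have hplt : (p : ℕ) < n := p.isLt
    rcases hx with ⟨hi, hp⟩ | ⟨hi, hp⟩ | ⟨hi, hp⟩ <;> dsimp only at hi hp
    · refine ⟨⟨(p : ℕ), by omega⟩, ?_⟩
      have hfp : f ⟨(p : ℕ), by omega⟩ = ⟨((1 : Fin 3), ⟨(p : ℕ), by omega⟩),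
          ne_delVert (Or.inr (by show (p:ℕ) ≠ n - 1; omega))⟩ := by
        rw [hfv]; dsimp only
        rw [dif_pos (show ((⟨(p : ℕ), by omega⟩ : Fin (n + 1)) : ℕ) < n - 2 from hp)]
      rw [hfp]
      exact Subtype.ext (Prod.ext hi.symm rfl)
    · refine ⟨⟨n - 2, by omega⟩, ?_⟩
      have hfp : f ⟨n - 2, by omega⟩ = A := by
        rw [hfv]; dsimp only
        rw [dif_neg (show ¬ ((⟨n - 2, by omega⟩ : Fin (n + 1)) : ℕ) < n - 2 by
            show ¬ (n - 2 < n - 2); omega),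
          dif_pos (show ((⟨n - 2, by omega⟩ : Fin (n + 1)) : ℕ) = n - 2 from rfl)]
      rw [hfp, hA]
      exact Subtype.ext (Prod.ext hi.symm (Fin.ext hp.symm))
    · by_cases hp2 : (p : ℕ) = n - 2
      · refine ⟨⟨n - 1, by omega⟩, ?_⟩
        have hfp : f ⟨n - 1, by omega⟩ = B := by
          rw [hfv]; dsimp only
          rw [dif_neg (show ¬ ((⟨n - 1, by omega⟩ : Fin (n + 1)) : ℕ) < n - 2 by
              show ¬ (n - 1 < n - 2); omega),
            dif_neg (show ¬ ((⟨n - 1, by omega⟩ : Fin (n + 1)) : ℕ) = n - 2 by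
              show ¬ (n - 1 = n - 2); omega),
            dif_pos (show ((⟨n - 1, by omega⟩ : Fin (n + 1)) : ℕ) = n - 1 from rfl)]
        rw [hfp, hB]
        exact Subtype.ext (Prod.ext hi.symm (Fin.ext hp2.symm))
      · have hp1 : (p : ℕ) = n - 1 := by omega
        refine ⟨⟨n, by omega⟩, ?_⟩
        have hfp : f ⟨n, by omega⟩ = C := by
          rw [hfv]; dsimp only
          rw [dif_neg (show ¬ ((⟨n, by omega⟩ : Fin (n + 1)) : ℕ) < n - 2 by
              show ¬ (n < n - 2); omega),
            dif_neg (show ¬ ((⟨n, by omega⟩ : Fin (n + 1)) : ℕ) = n - 2 by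
              show ¬ (n = n - 2); omega),
            dif_neg (show ¬ ((⟨n, by omega⟩ : Fin (n + 1)) : ℕ) = n - 1 by
              show ¬ (n = n - 1); omega)]
        rw [hfp, hC]
        exact Subtype.ext (Prod.ext hi.symm (Fin.ext hp1.symm))
  have hbij : Function.Bijective (fun k : Fin (n + 1) => (⟨f k, hmem k⟩ : ↥(g0Cut n h))) := by
    constructor
    · intro k1 k2 he
      exact hinj (congrArg Subtype.val he)
    · rintro ⟨x, hx⟩
      obtain ⟨k, hk⟩ := hsurj x hx
      exact ⟨k, Subtype.ext hk⟩
  have hcard := Nat.card_eq_of_bijective _ hbij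
  rw [← Nat.card_coe_set_eq, ← hcard]
  simp

end Part2

section Part3
variable {n : ℕ} {h : 0 < n}

lemma cut_numComp (hn : 3 ≤ n) : numComp (G0 n h) (g0Cut n h) = 3 := by
  set S := g0Cut n h with hS
  have hvert : ∀ a b : ↥Sᶜ, a.1.1.2 = b.1.1.2 → (a.1.1.1 : ℕ) + 1 = (b.1.1.1 : ℕ) → False := by
    intro a b hcc hrr
    obtain ⟨⟨⟨i, p⟩, hne⟩, haS⟩ := a
    obtain ⟨⟨⟨j, r⟩, hne2⟩, hbS⟩ := b
    dsimp only at hcc hrr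
    subst hcc
    have hj3 : (j : ℕ) < 3 := j.isLt
    have hi2 : (i : ℕ) = 0 ∨ (i : ℕ) = 1 := by omega
    have hplt : (p : ℕ) < n := p.isLt
    rcases hi2 with hi0 | hi1
    · have hj1 : j = (1 : Fin 3) := Fin.ext (show (j : ℕ) = 1 by omega)
      have hp1 : ¬ ((p : ℕ) < n - 2) := fun hlt => hbS (Or.inl ⟨hj1, hlt⟩)
      have hp2 : (p : ℕ) ≠ n - 1 := fun he => hne2 (Prod.ext hj1 (Fin.ext he))
      have hp3 : (p : ℕ) = n - 2 := by omega
      have hi0' : i = (0 : Fin 3) := Fin.ext (show (i : ℕ) = 0 by omega)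
      exact haS (Or.inr (Or.inl ⟨hi0', hp3⟩))
    · have hj2 : j = (2 : Fin 3) := Fin.ext (show (j : ℕ) = 2 by omega)
      have hi1' : i = (1 : Fin 3) := Fin.ext (show (i : ℕ) = 1 by omega)
      have hp1 : ¬ ((p : ℕ) < n - 2) := fun hlt => haS (Or.inl ⟨hi1', hlt⟩)
      exact hbS (Or.inr (Or.inr ⟨hj2, show n - 2 ≤ (p : ℕ) by omega⟩))
  have hdiag : ∀ a b : ↥Sᶜ,
      a.1.1 = ((0 : Fin 3), (⟨n - 1, Nat.sub_lt h Nat.one_pos⟩ : Fin n)) →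
      b.1.1 = ((2 : Fin 3), (⟨n - 1, Nat.sub_lt h Nat.one_pos⟩ : Fin n)) → False := by
    intro a b ha hb
    refine b.2 (Or.inr (Or.inr ⟨?_, ?_⟩))
    · rw [hb]
    · rw [hb]
      show n - 2 ≤ n - 1
      omega
  have hAdjRow : ∀ a b : ↥Sᶜ, ((G0 n h).induce Sᶜ).Adj a b → a.1.1.1 = b.1.1.1 := by
    intro a b hab
    have hadj : (G0 n h).Adj a.1 b.1 := hab
    rw [G0, SimpleGraph.fromRel_adj] at hadj
    rcases hadj.2 with (⟨hr, _⟩ | ⟨hcc, hrr⟩ | ⟨h0, h2⟩) | (⟨hr, _⟩ | ⟨hcc, hrr⟩ | ⟨h0, h2⟩)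
    · exact hr
    · exact (hvert a b hcc hrr).elim
    · exact (hdiag a b h0 h2).elim
    · exact hr.symm
    · exact (hvert b a hcc hrr).elim
    · exact (hdiag b a h0 h2).elim
  have hwalk : ∀ (u v : ↥Sᶜ) (p : ((G0 n h).induce Sᶜ).Walk u v), u.1.1.1 = v.1.1.1 := by
    intro u v p
    induction p with
    | nil => rfl
    | cons hadj _ ih => exact (hAdjRow _ _ hadj).trans ih
  set φ : ((G0 n h).induce Sᶜ).ConnectedComponent → Fin 3 :=
    ConnectedComponent.lift (fun v => v.1.1.1) (fun u v p _ => hwalk u v p) with hφ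
  have hinj : Injective φ := by
    intro c d hcd
    obtain ⟨u, hu⟩ := c.exists_rep
    obtain ⟨v, hv⟩ := d.exists_rep
    rw [← hu, ← hv] at hcd ⊢
    exact ConnectedComponent.sound (reach_row hcd)
  have hz : (0 : ℕ) < n := by omega
  have hz2 : n - 2 < n := by omega
  have hs0 : (⟨((0 : Fin 3), ⟨0, hz⟩), ne_delVert (Or.inl (by decide))⟩ : Vtx n h) ∈ Sᶜ := by
    intro hm
    rcases hm with ⟨h1, _⟩ | ⟨_, h2⟩ | ⟨h1, _⟩
    · exact absurd h1 (show (0 : Fin 3) ≠ 1 by decide)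
    · exact absurd h2 (show ¬ ((0 : ℕ) = n - 2) by omega)
    · exact absurd h1 (show (0 : Fin 3) ≠ 2 by decide)
  have hs1 : (⟨((1 : Fin 3), ⟨n - 2, hz2⟩),
      ne_delVert (Or.inr (show n - 2 ≠ n - 1 by omega))⟩ : Vtx n h) ∈ Sᶜ := by
    intro hm
    rcases hm with ⟨_, h2⟩ | ⟨h1, _⟩ | ⟨h1, _⟩
    · exact absurd h2 (show ¬ (n - 2 < n - 2) by omega)
    · exact absurd h1 (show (1 : Fin 3) ≠ 0 by decide)
    · exact absurd h1 (show (1 : Fin 3) ≠ 2 by decide)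
  have hs2 : (⟨((2 : Fin 3), ⟨0, hz⟩), ne_delVert (Or.inl (by decide))⟩ : Vtx n h) ∈ Sᶜ := by
    intro hm
    rcases hm with ⟨h1, _⟩ | ⟨h1, _⟩ | ⟨_, h2⟩
    · exact absurd h1 (show (2 : Fin 3) ≠ 1 by decide)
    · exact absurd h1 (show (2 : Fin 3) ≠ 0 by decide)
    · exact absurd h2 (show ¬ (n - 2 ≤ 0) by omega)
  have hsurj : Surjective φ := by
    intro i
    obtain ⟨iv, hiv⟩ := i
    interval_cases iv
    · exact ⟨((G0 n h).induce Sᶜ).connectedComponentMk ⟨_, hs0⟩, rfl⟩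
    · exact ⟨((G0 n h).induce Sᶜ).connectedComponentMk ⟨_, hs1⟩, rfl⟩
    · exact ⟨((G0 n h).induce Sᶜ).connectedComponentMk ⟨_, hs2⟩, rfl⟩
  have hcard := Nat.card_eq_of_bijective φ ⟨hinj, hsurj⟩
  rw [numComp, hcard]
  simp

end Part3


/-- for `n ≥ 3`, the toughness of `G_0` equals `(n+1)/3`: every
vertex set `S` with `ω(G_0 − S) ≥ 2` satisfies `3|S| ≥ (n+1)·ω(G_0 − S)`, and
the displayed set `S` satisfies `|S| = n + 1` and `ω(G_0 − S) = 3`. -/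
theorem G0_toughness (n : ℕ) (hn : 3 ≤ n) :
    (∀ S : Set {x : Fin 3 × Fin n // x ≠ delVert n (by omega)},
      2 ≤ numComp (G0 n (by omega)) S →
      (n + 1) * numComp (G0 n (by omega)) S ≤ 3 * S.ncard) ∧
    (g0Cut n (by omega)).ncard = n + 1 ∧
    numComp (G0 n (by omega)) (g0Cut n (by omega)) = 3 := by
  exact ⟨fun S h2 => part1 hn S h2, cut_ncard hn, cut_numComp hn⟩
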